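/- Let k : ℝᵈ × ℝᵈ → ℝ be a symmetric positive-semidefinite kernel that is continuously differentiable with all first-order partial derivatives bounded in absolute value by L_k ≥ 0, and such that k(x,y) ≤ k_max for all x, y ∈ ℝᵈ, where k_max > 0. Fix a test point x_ref ∈ ℝᵈ, a noise level σ > 0, and n ∈ ℕ. Then the map (x₁,…,xₙ) ↦ σ²_{(x₁,…,xₙ)}(x_ref) from (ℝᵈ)ⁿ to ℝ, sending a data tuple to the GP posterior variance at x_ref, is Lipschitz continuous with respect to the ℓ¹-norm on (ℝᵈ)ⁿ ≅ ℝ^{n·d} with Lipschitz constant L_σ = (2·L_k·√k_max/σ)·(1 + √(n·k_max)/σ). -/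

import Mathlib

open Matrix

/-- The kernel matrix `[k(p i, p j)]_{i,j}` of a tuple of points. -/
noncomputable def kerMat {α : Type*} {m : ℕ} (k : α → α → ℝ) (p : Fin m → α) :
    Matrix (Fin m) (Fin m) ℝ :=
  Matrix.of fun i j => k (p i) (p j)

/-- The GP posterior variance at a test point `z` given data points `p` and
noise variance `σ²`:
`σ²_p(z) = k(z,z) − k_p(z)ᵀ (K_p + σ² I)⁻¹ k_p(z)`. -/
noncomputable def postVar {α : Type*} {m : ℕ} (k : α → α → ℝ) (σ : ℝ) (p : Fin m → α)
    (z : α) : ℝ :=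
  k z z - (fun i => k (p i) z) ⬝ᵥ
    ((kerMat k p + σ ^ 2 • (1 : Matrix (Fin m) (Fin m) ℝ))⁻¹ *ᵥ fun i => k (p i) z)

/-! Write `A_X = K_X + σ²I`, `v_X = k_X(z)` and `w_X = A_X⁻¹ v_X`. Since `A_X` is symmetric,
`σ²_Y(z) - σ²_X(z) = (v_X - v_Y) ⬝ (w_X + w_Y) - w_Xᵀ (A_X - A_Y) w_Y`.
Positive semidefiniteness of the kernel matrix of `(z, X)` at the vector `(1, -w_X)` gives
`σ² ‖w_X‖₂² ≤ k(z, z) ≤ k_max`, hence `|w_X l| ≤ √k_max / σ` and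
`‖w_X‖₁ ≤ √(n k_max) / σ`. By the mean value theorem the entries of `v_X - v_Y` and
`A_X - A_Y` are bounded by `L_k` times ℓ¹-distances of the data points; the two terms of the
identity then contribute the `1` and the `√(n k_max) / σ` of the constant. -/

theorem abs_sub_le_of_abs_fderiv_apply_le {E : Type*} [NormedAddCommGroup E] [NormedSpace ℝ E]
    {f : E → ℝ} (hf : Differentiable ℝ f) {x y : E} {C : ℝ}
    (hC : ∀ z, |fderiv ℝ f z (y - x)| ≤ C) : |f y - f x| ≤ C := by
  have hderiv (t : ℝ) : HasDerivAt (fun t : ℝ => f (x + t • (y - x)))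
      (fderiv ℝ f (x + t • (y - x)) (y - x)) t := by
    have := (hf _).hasFDerivAt.comp_hasDerivAt t
      (((hasDerivAt_id t).smul_const (y - x)).const_add x)
    rwa [one_smul] at this
  simpa using norm_image_sub_le_of_norm_deriv_le_segment_01'
    (fun t _ => (hderiv t).hasDerivWithinAt) (fun t _ => hC _)

section Coordinates

variable {ι : Type*} [Fintype ι] [DecidableEq ι]

theorem abs_apply_le_mul_sum_abs (φ : (ι → ℝ) →ₗ[ℝ] ℝ) {C : ℝ}
    (hφ : ∀ i, |φ (Pi.single i 1)| ≤ C) (x : ι → ℝ) : |φ x| ≤ C * ∑ i, |x i| := by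
  have hx : φ x = ∑ i, x i * φ (Pi.single i 1) := by
    conv_lhs => rw [← Finset.univ_sum_single x]
    refine (map_sum φ _ _).trans (Finset.sum_congr rfl fun i _ => ?_)
    rw [← smul_eq_mul, ← map_smul, ← Pi.single_smul', smul_eq_mul, mul_one]
  calc |φ x| ≤ ∑ i, |x i * φ (Pi.single i 1)| := hx ▸ Finset.abs_sum_le_sum_abs _ _
    _ ≤ ∑ i, |x i| * C := by gcongr with i; rw [abs_mul]; gcongr; exact hφ i
    _ = C * ∑ i, |x i| := by rw [Finset.mul_sum]; simp only [mul_comm]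

theorem abs_apply_prod_le (L : (ι → ℝ) × (ι → ℝ) →L[ℝ] ℝ) {C : ℝ}
    (hL : ∀ i, |L (Pi.single i 1, 0)| ≤ C ∧ |L (0, Pi.single i 1)| ≤ C)
    (h : (ι → ℝ) × (ι → ℝ)) : |L h| ≤ C * (∑ i, |h.1 i| + ∑ i, |h.2 i|) := by
  rw [← L.comp_inl_add_comp_inr, mul_add]
  exact (abs_add_le _ _).trans (add_le_add
    (abs_apply_le_mul_sum_abs (L.comp (.inl ℝ _ _)).toLinearMap (fun i => (hL i).1) _)
    (abs_apply_le_mul_sum_abs (L.comp (.inr ℝ _ _)).toLinearMap (fun i => (hL i).2) _))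

theorem abs_sub_le_of_abs_fderiv_single_le {K : (ι → ℝ) × (ι → ℝ) → ℝ}
    (hK : Differentiable ℝ K) {C : ℝ}
    (hC : ∀ p i,
      |fderiv ℝ K p (Pi.single i 1, 0)| ≤ C ∧ |fderiv ℝ K p (0, Pi.single i 1)| ≤ C)
    (q q' : (ι → ℝ) × (ι → ℝ)) :
    |K q - K q'| ≤ C * (∑ i, |q.1 i - q'.1 i| + ∑ i, |q.2 i - q'.2 i|) :=
  abs_sub_le_of_abs_fderiv_apply_le hK fun p => abs_apply_prod_le _ (hC p) _

end Coordinates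

section DotProduct

variable {ι : Type*} [Fintype ι]

theorem dotProduct_sub_dotProduct_eq {R : Type*} [CommRing R] {A B : Matrix ι ι R}
    {a b u w : ι → R} (hA : Aᵀ = A) (hu : A *ᵥ u = a) (hw : B *ᵥ w = b) :
    a ⬝ᵥ u - b ⬝ᵥ w = (a - b) ⬝ᵥ (u + w) - u ⬝ᵥ ((A - B) *ᵥ w) := by
  have huA : u ⬝ᵥ (A *ᵥ w) = a ⬝ᵥ w := by
    rw [dotProduct_mulVec, ← mulVec_transpose, hA, hu]
  rw [sub_mulVec, dotProduct_sub, huA, hw, dotProduct_add, sub_dotProduct, sub_dotProduct,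
    dotProduct_comm u b]
  ring

theorem sum_mul_abs_le {δ u : ι → ℝ} {c : ℝ} (hδ : ∀ l, 0 ≤ δ l)
    (hu : ∀ l, |u l| ≤ c) :
    ∑ l, δ l * |u l| ≤ c * ∑ l, δ l := by
  rw [Finset.mul_sum]
  exact Finset.sum_le_sum fun l _ => by
    rw [mul_comm c]; exact mul_le_mul_of_nonneg_left (hu l) (hδ l)

theorem abs_dotProduct_le {a u δ : ι → ℝ} {c : ℝ} (ha : ∀ l, |a l| ≤ δ l)
    (hu : ∀ l, |u l| ≤ c) : |a ⬝ᵥ u| ≤ c * ∑ l, δ l :=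
  calc |a ⬝ᵥ u| ≤ ∑ l, |a l| * |u l| :=
        (Finset.abs_sum_le_sum_abs _ _).trans_eq (Finset.sum_congr rfl fun l _ => abs_mul _ _)
    _ ≤ ∑ l, δ l * |u l| := by gcongr with l; exact ha l
    _ ≤ c * ∑ l, δ l := sum_mul_abs_le (fun l => (abs_nonneg _).trans (ha l)) hu

theorem abs_dotProduct_mulVec_le {M : Matrix ι ι ℝ} {δ u w : ι → ℝ} {c s : ℝ}
    (hM : ∀ l r, |M l r| ≤ δ l + δ r) (hu : ∀ l, |u l| ≤ c) (hw : ∀ l, |w l| ≤ c)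
    (hsu : ∑ l, |u l| ≤ s) (hsw : ∑ l, |w l| ≤ s) :
    |u ⬝ᵥ (M *ᵥ w)| ≤ 2 * c * s * ∑ l, δ l := by
  -- the diagonal entries force `δ ≥ 0`
  have hδ (l : ι) : 0 ≤ δ l := by linarith [abs_nonneg (M l l), hM l l]
  have hs : 0 ≤ s := (Finset.sum_nonneg fun l _ => abs_nonneg (u l)).trans hsu
  have hδu : 0 ≤ ∑ l, δ l * |u l| :=
    Finset.sum_nonneg fun l _ => mul_nonneg (hδ l) (abs_nonneg _)
  have hδw : 0 ≤ ∑ l, δ l * |w l| :=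
    Finset.sum_nonneg fun l _ => mul_nonneg (hδ l) (abs_nonneg _)
  calc |u ⬝ᵥ (M *ᵥ w)| ≤ ∑ l, ∑ r, |u l| * |M l r| * |w r| := by
        simp only [dotProduct, mulVec, Finset.mul_sum]
        refine (Finset.abs_sum_le_sum_abs _ _).trans (Finset.sum_le_sum fun l _ => ?_)
        refine (Finset.abs_sum_le_sum_abs _ _).trans_eq (Finset.sum_congr rfl fun r _ => ?_)
        rw [abs_mul, abs_mul, mul_assoc]
    _ ≤ ∑ l, ∑ r, |u l| * (δ l + δ r) * |w r| := by gcongr with l _ r _; exact hM l r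
    _ = (∑ l, δ l * |u l|) * ∑ r, |w r| + (∑ l, |u l|) * ∑ r, δ r * |w r| := by
        rw [Finset.sum_mul_sum, Finset.sum_mul_sum, ← Finset.sum_add_distrib]
        refine Finset.sum_congr rfl fun l _ => ?_
        rw [← Finset.sum_add_distrib]
        exact Finset.sum_congr rfl fun r _ => by ring
    _ ≤ (c * ∑ l, δ l) * s + s * (c * ∑ l, δ l) := by
        have hδu' := sum_mul_abs_le hδ hu
        have hδw' := sum_mul_abs_le hδ hw
        have hcδ : 0 ≤ c * ∑ l, δ l := hδu.trans hδu'
        gcongr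
    _ = 2 * c * s * ∑ l, δ l := by ring

end DotProduct

section Vectors

variable {ι : Type*} [Fintype ι] {w : ι → ℝ} {b : ℝ}

theorem abs_le_sqrt_of_dotProduct_self_le (h : w ⬝ᵥ w ≤ b) (l : ι) : |w l| ≤ √b :=
  Real.abs_le_sqrt <| (Finset.single_le_sum (f := fun l => w l ^ 2)
    (fun l _ => sq_nonneg _) (Finset.mem_univ l)).trans (by simpa [dotProduct, sq] using h)

theorem sum_abs_le_sqrt_of_dotProduct_self_le (h : w ⬝ᵥ w ≤ b) :
    ∑ l, |w l| ≤ √(Fintype.card ι * b) := by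
  refine (le_abs_self _).trans (Real.abs_le_sqrt ?_)
  calc (∑ l, |w l|) ^ 2 = (∑ l, 1 * |w l|) ^ 2 := by simp only [one_mul]
    _ ≤ (∑ _l : ι, (1 : ℝ) ^ 2) * ∑ l, |w l| ^ 2 := Finset.sum_mul_sq_le_sq_mul_sq _ _ _
    _ ≤ Fintype.card ι * b := by
        simpa [dotProduct, sq] using
          mul_le_mul_of_nonneg_left h (Nat.cast_nonneg (Fintype.card ι))

end Vectors

section Kernel

variable {α : Type*} {k : α → α → ℝ} {m : ℕ} {σ : ℝ}

noncomputable def noisyKerMat (k : α → α → ℝ) (σ : ℝ) (p : Fin m → α) :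
    Matrix (Fin m) (Fin m) ℝ :=
  kerMat k p + σ ^ 2 • 1

def kerVec (k : α → α → ℝ) (p : Fin m → α) (z : α) : Fin m → ℝ :=
  fun i => k (p i) z

noncomputable def postWeights (k : α → α → ℝ) (σ : ℝ) (p : Fin m → α) (z : α) :
    Fin m → ℝ :=
  (noisyKerMat k σ p)⁻¹ *ᵥ kerVec k p z

theorem postVar_eq_sub_dotProduct (k : α → α → ℝ) (σ : ℝ) (p : Fin m → α) (z : α) :
    postVar k σ p z = k z z - kerVec k p z ⬝ᵥ postWeights k σ p z :=
  rfl

theorem transpose_noisyKerMat (hsymm : ∀ x y, k x y = k y x) (σ : ℝ) (p : Fin m → α) :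
    (noisyKerMat k σ p)ᵀ = noisyKerMat k σ p := by
  ext i j
  simp [noisyKerMat, kerMat, one_apply, hsymm (p j), eq_comm]

theorem posDef_noisyKerMat {p : Fin m → α} (hpsd : (kerMat k p).PosSemidef) (hσ : σ ≠ 0) :
    (noisyKerMat k σ p).PosDef :=
  PosDef.posSemidef_add hpsd (PosDef.one.smul (by positivity))

theorem noisyKerMat_mulVec_postWeights {p : Fin m → α} (hpsd : (kerMat k p).PosSemidef)
    (hσ : σ ≠ 0) (z : α) : noisyKerMat k σ p *ᵥ postWeights k σ p z = kerVec k p z := by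
  rw [postWeights, mulVec_mulVec,
    mul_nonsing_inv _ (posDef_noisyKerMat hpsd hσ).det_pos.ne'.isUnit, one_mulVec]

theorem dotProduct_kerMat_cons_mulVec (hsymm : ∀ x y, k x y = k y x) (p : Fin m → α) (z : α)
    (w : Fin m → ℝ) :
    (Fin.cons 1 (-w) : Fin (m + 1) → ℝ) ⬝ᵥ (kerMat k (Fin.cons z p) *ᵥ Fin.cons 1 (-w)) =
      k z z - 2 * (kerVec k p z ⬝ᵥ w) + w ⬝ᵥ (kerMat k p *ᵥ w) := by
  simp only [dotProduct, mulVec, kerMat, of_apply, Fin.sum_univ_succ, Fin.cons_zero,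
    Fin.cons_succ, kerVec, Pi.neg_apply, hsymm z]
  simp only [one_mul, mul_one, mul_neg, neg_mul, neg_neg, mul_add, Finset.sum_neg_distrib,
    Finset.sum_add_distrib, mul_comm (w _) (k _ _)]
  ring

theorem sq_mul_postWeights_dotProduct_self_le (hsymm : ∀ x y, k x y = k y x)
    (hpsd : ∀ (m : ℕ) (p : Fin m → α), (kerMat k p).PosSemidef) (hσ : σ ≠ 0)
    (p : Fin m → α) (z : α) :
    σ ^ 2 * (postWeights k σ p z ⬝ᵥ postWeights k σ p z) ≤ k z z := by
  set w := postWeights k σ p z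
  have hK : 0 ≤ w ⬝ᵥ (kerMat k p *ᵥ w) := by
    simpa using (hpsd m p).dotProduct_mulVec_nonneg w
  have hext : 0 ≤ k z z - 2 * (kerVec k p z ⬝ᵥ w) + w ⬝ᵥ (kerMat k p *ᵥ w) := by
    simpa [dotProduct_kerMat_cons_mulVec hsymm] using
      (hpsd (m + 1) (Fin.cons z p)).dotProduct_mulVec_nonneg (Fin.cons 1 (-w))
  have hv : kerVec k p z ⬝ᵥ w = w ⬝ᵥ (kerMat k p *ᵥ w) + σ ^ 2 * (w ⬝ᵥ w) := by
    rw [← noisyKerMat_mulVec_postWeights (hpsd m p) hσ z, noisyKerMat, add_mulVec, smul_mulVec,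
      one_mulVec, add_dotProduct, smul_dotProduct, smul_eq_mul, dotProduct_comm _ w]
  have hw : 0 ≤ σ ^ 2 * (w ⬝ᵥ w) := mul_nonneg (sq_nonneg σ) (dotProduct_self_star_nonneg w)
  linarith

theorem postWeights_dotProduct_self_le {kmax : ℝ} (hsymm : ∀ x y, k x y = k y x)
    (hpsd : ∀ (m : ℕ) (p : Fin m → α), (kerMat k p).PosSemidef) (hσ : 0 < σ)
    (p : Fin m → α) {z : α} (hz : k z z ≤ kmax) :
    postWeights k σ p z ⬝ᵥ postWeights k σ p z ≤ kmax / σ ^ 2 := by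
  rw [le_div_iff₀ (by positivity), mul_comm]
  exact (sq_mul_postWeights_dotProduct_self_le hsymm hpsd hσ.ne' p z).trans hz

theorem abs_postWeights_le {kmax : ℝ} (hsymm : ∀ x y, k x y = k y x)
    (hpsd : ∀ (m : ℕ) (p : Fin m → α), (kerMat k p).PosSemidef) (hσ : 0 < σ)
    (p : Fin m → α) {z : α} (hz : k z z ≤ kmax) (l : Fin m) :
    |postWeights k σ p z l| ≤ √kmax / σ := by
  simpa [Real.sqrt_div' _ (sq_nonneg σ), Real.sqrt_sq hσ.le] using
    abs_le_sqrt_of_dotProduct_self_le (postWeights_dotProduct_self_le hsymm hpsd hσ p hz) l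

theorem sum_abs_postWeights_le {kmax : ℝ} (hsymm : ∀ x y, k x y = k y x)
    (hpsd : ∀ (m : ℕ) (p : Fin m → α), (kerMat k p).PosSemidef) (hσ : 0 < σ)
    (p : Fin m → α) {z : α} (hz : k z z ≤ kmax) :
    ∑ l, |postWeights k σ p z l| ≤ √(m * kmax) / σ := by
  simpa [← mul_div_assoc, Real.sqrt_div' _ (sq_nonneg σ), Real.sqrt_sq hσ.le] using
    sum_abs_le_sqrt_of_dotProduct_self_le (postWeights_dotProduct_self_le hsymm hpsd hσ p hz)

theorem postVar_sub_postVar (hsymm : ∀ x y, k x y = k y x) {X Y : Fin m → α}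
    (hX : (kerMat k X).PosSemidef) (hY : (kerMat k Y).PosSemidef) (hσ : σ ≠ 0) (z : α) :
    postVar k σ Y z - postVar k σ X z =
      (kerVec k X z - kerVec k Y z) ⬝ᵥ (postWeights k σ X z + postWeights k σ Y z) -
        postWeights k σ X z ⬝ᵥ
          ((noisyKerMat k σ X - noisyKerMat k σ Y) *ᵥ postWeights k σ Y z) := by
  rw [postVar_eq_sub_dotProduct, postVar_eq_sub_dotProduct, sub_sub_sub_cancel_left]
  exact dotProduct_sub_dotProduct_eq (transpose_noisyKerMat hsymm σ X)
    (noisyKerMat_mulVec_postWeights hX hσ z) (noisyKerMat_mulVec_postWeights hY hσ z)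

theorem noisyKerMat_sub_noisyKerMat_apply (k : α → α → ℝ) (σ : ℝ) (X Y : Fin m → α)
    (l r : Fin m) :
    (noisyKerMat k σ X - noisyKerMat k σ Y) l r = k (X l) (X r) - k (Y l) (Y r) := by
  simp [noisyKerMat, kerMat]

end Kernel

theorem posterior_variance_lipschitz_general (d : ℕ)
    (k : (Fin d → ℝ) → (Fin d → ℝ) → ℝ)
    (hsymm : ∀ x y, k x y = k y x)
    (hpsd : ∀ (m : ℕ) (p : Fin m → (Fin d → ℝ)), (kerMat k p).PosSemidef)
    (hsmooth : ContDiff ℝ 1 (fun p : (Fin d → ℝ) × (Fin d → ℝ) => k p.1 p.2))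
    (Lk : ℝ)
    (hderiv : ∀ (p : (Fin d → ℝ) × (Fin d → ℝ)) (i : Fin d),
      |fderiv ℝ (fun q : (Fin d → ℝ) × (Fin d → ℝ) => k q.1 q.2) p (Pi.single i 1, 0)| ≤ Lk ∧
      |fderiv ℝ (fun q : (Fin d → ℝ) × (Fin d → ℝ) => k q.1 q.2) p (0, Pi.single i 1)| ≤ Lk)
    (kmax : ℝ) (hkbound : ∀ x y, k x y ≤ kmax)
    (xref : Fin d → ℝ) (σ : ℝ) (hσ : 0 < σ) (n : ℕ) :
    ∀ X Y : Fin n → (Fin d → ℝ),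
      |postVar k σ X xref - postVar k σ Y xref| ≤
        (2 * Lk * Real.sqrt kmax / σ) * (1 + Real.sqrt (n * kmax) / σ) *
          ∑ j : Fin n, ∑ i : Fin d, |X j i - Y j i| := by
  intro X Y
  have hlip := abs_sub_le_of_abs_fderiv_single_le (hsmooth.differentiable one_ne_zero) hderiv
  set δ : Fin n → ℝ := fun j => ∑ i, |X j i - Y j i|
  have hv (l : Fin n) : |(kerVec k X xref - kerVec k Y xref) l| ≤ Lk * δ l := by
    simpa [kerVec] using hlip (X l, xref) (Y l, xref)
  have hA (l r : Fin n) :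
      |(noisyKerMat k σ X - noisyKerMat k σ Y) l r| ≤ Lk * δ l + Lk * δ r := by
    rw [noisyKerMat_sub_noisyKerMat_apply, ← mul_add]
    exact hlip (X l, X r) (Y l, Y r)
  have hu (p : Fin n → Fin d → ℝ) := abs_postWeights_le hsymm hpsd hσ p (hkbound xref xref)
  have hs (p : Fin n → Fin d → ℝ) :=
    sum_abs_postWeights_le hsymm hpsd hσ p (hkbound xref xref)
  have h1 := abs_dotProduct_le hv fun l => (abs_add_le _ _).trans (add_le_add (hu X l) (hu Y l))
  have h2 := abs_dotProduct_mulVec_le hA (hu X) (hu Y) (hs X) (hs Y)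
  rw [abs_sub_comm, postVar_sub_postVar hsymm (hpsd n X) (hpsd n Y) hσ.ne']
  calc _ ≤ _ := abs_sub _ _
    _ ≤ _ := add_le_add h1 h2
    _ = _ := by simp only [← Finset.mul_sum]; ring

/-- **Corollary 4 of the paper.** For a symmetric PSD kernel `k`
that is continuously differentiable, with all first-order partial derivatives
bounded in absolute value by `L_k` and with `k ≤ k_max`, the map sending the
data tuple `(x₁,…,xₙ)` to the GP posterior variance `σ²_{(x₁,…,xₙ)}(x_ref)` is
Lipschitz with respect to the ℓ¹-norm on `(ℝᵈ)ⁿ`, with constant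
`L_σ = (2L_k√k_max/σ)(1 + √(n·k_max)/σ)`. -/
theorem posterior_variance_lipschitz (d : ℕ)
    (k : (Fin d → ℝ) → (Fin d → ℝ) → ℝ)
    (hsymm : ∀ x y, k x y = k y x)
    (hpsd : ∀ (m : ℕ) (p : Fin m → (Fin d → ℝ)), (kerMat k p).PosSemidef)
    (hsmooth : ContDiff ℝ 1 (fun p : (Fin d → ℝ) × (Fin d → ℝ) => k p.1 p.2))
    (Lk : ℝ) (hLk : 0 ≤ Lk)
    (hderiv : ∀ (p : (Fin d → ℝ) × (Fin d → ℝ)) (i : Fin d),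
      |fderiv ℝ (fun q : (Fin d → ℝ) × (Fin d → ℝ) => k q.1 q.2) p (Pi.single i 1, 0)| ≤ Lk ∧
      |fderiv ℝ (fun q : (Fin d → ℝ) × (Fin d → ℝ) => k q.1 q.2) p (0, Pi.single i 1)| ≤ Lk)
    (kmax : ℝ) (hkmax : 0 < kmax) (hkbound : ∀ x y, k x y ≤ kmax)
    (xref : Fin d → ℝ) (σ : ℝ) (hσ : 0 < σ) (n : ℕ) :
    ∀ X Y : Fin n → (Fin d → ℝ),
      |postVar k σ X xref - postVar k σ Y xref| ≤
        (2 * Lk * Real.sqrt kmax / σ) * (1 + Real.sqrt (n * kmax) / σ) *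
          ∑ j : Fin n, ∑ i : Fin d, |X j i - Y j i| :=
  posterior_variance_lipschitz_general d k hsymm hpsd hsmooth Lk hderiv kmax hkbound xref σ hσ n
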